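/- arXiv:1111.4963 — 2 statements merged into one kernel-verified Lean document; each statement's English description precedes it below -/
import Mathlib

section
/- Let K be a number field with unit rank r, and fix κ > 0. There exists a constant q (depending only on κ, K, and a choice of fundamental units) such that for every D ≥ 1 + κ, the number of units u ∈ O_K^× with H_K(u) ≤ D is at most q · (log D)^r. -/
/-!
For a unit `u` every finite place contributes `1` to the height, so
`log H_K(u) = ∑_w max (n_w log w(u), 0)`; since `∑_w n_w log w(u) = log |N(u)| = 0`, every
coordinate of the logarithmic embedding of `u` is bounded by `log H_K(u)`. The units of height at
most `D` therefore lie, up to torsion, over the points of the unit lattice in the sup-norm ball of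
radius `log D`. A discrete subgroup of `ℝ^r` has at most `(2T + 2)^r` times as many points in the
ball of radius `T` as in the unit ball: two points with the same coordinatewise integer parts differ
by a lattice point of norm less than `1`.
-/

open NumberField IsDedekindDomain Real
open scoped nonZeroDivisors Classical

variable (K : Type*) [Field K] [NumberField K]

/-- The normalized `v`-adic absolute value `|x|_v^{n_v} = N(v)^{-ord_v(x)}` at a finite place. -/
noncomputable def vadicAbs (v : HeightOneSpectrum (𝓞 K)) (x : K) : ℝ :=
  if hx : v.valuation K x = 0 then 0
  else (Ideal.absNorm v.asIdeal : ℝ) ^ (Multiplicative.toAdd (WithZero.unzero hx))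

/-- The relative multiplicative height `H_K(x) = ∏_{v ∈ M_K} max {|x|_v^{n_v}, 1}`. -/
noncomputable def relHeight (x : K) : ℝ :=
  (∏ w : InfinitePlace K, max (w x ^ w.mult) 1) *
    ∏ᶠ v : HeightOneSpectrum (𝓞 K), max (vadicAbs K v x) 1

theorem abs_le_sum_max_zero_of_sum_eq_zero {ι : Type*} [Fintype ι] {s : ι → ℝ}
    (hs : ∑ j, s j = 0) (i : ι) : |s i| ≤ ∑ j, max (s j) 0 := by
  rw [← Finset.add_sum_erase _ _ (Finset.mem_univ i)] at hs ⊢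
  have hrest : ∑ j ∈ Finset.univ.erase i, s j ≤ ∑ j ∈ Finset.univ.erase i, max (s j) 0 :=
    Finset.sum_le_sum fun j _ => le_max_left _ _
  have hrest_nonneg : 0 ≤ ∑ j ∈ Finset.univ.erase i, max (s j) 0 :=
    Finset.sum_nonneg fun j _ => le_max_right _ _
  rw [abs_le]
  constructor <;> linarith [le_max_left (s i) 0, le_max_right (s i) 0]

theorem Real.log_max_one {x : ℝ} (hx : 0 < x) : Real.log (max x 1) = max (Real.log x) 0 := by
  rcases le_total x 1 with h | h
  · rw [max_eq_right h, Real.log_one, max_eq_right (Real.log_nonpos hx.le h)]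
  · rw [max_eq_left h, max_eq_left (Real.log_nonneg h)]

noncomputable def AddMonoidHom.preimageEquivKerProd {G H : Type*} [AddGroup G] [AddGroup H]
    (f : G →+ H) (t : Set H) : f ⁻¹' t ≃ f.ker × (Set.range f ∩ t : Set H) :=
  let t' : Set (G ⧸ f.ker) := QuotientAddGroup.kerLift f ⁻¹' t
  (QuotientAddGroup.preimageMkEquivAddSubgroupProdSet f.ker t').trans <|
    (Equiv.refl _).prodCongr <|
      (Equiv.Set.image _ t' (QuotientAddGroup.kerLift_injective f)).trans <| Equiv.setCongr <| by
        rw [Set.image_preimage_eq_range_inter, ← QuotientAddGroup.mk_surjective.range_comp]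
        rfl

section Lattice

variable {ι : Type*} [Fintype ι] (L : AddSubgroup (ι → ℝ)) [DiscreteTopology L]

theorem AddSubgroup.finite_inter_closedBall (r : ℝ) :
    ((L : Set (ι → ℝ)) ∩ Metric.closedBall 0 r).Finite := by
  rw [Set.inter_comm]
  exact Metric.finite_isBounded_inter_isClosed DiscreteTopology.isDiscrete
    Metric.isBounded_closedBall AddSubgroup.isClosed_of_discrete

theorem Int.card_Icc_floor_neg_floor_le {T : ℝ} (hT : 0 ≤ T) :
    ((Finset.Icc ⌊-T⌋ ⌊T⌋).card : ℝ) ≤ 2 * T + 2 := by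
  have hle : ⌊-T⌋ ≤ ⌊T⌋ + 1 := by
    have := Int.floor_mono (neg_le_self hT); omega
  have hcard : ((Finset.Icc ⌊-T⌋ ⌊T⌋).card : ℤ) = ⌊T⌋ + 1 - ⌊-T⌋ := Int.card_Icc_of_le _ _ hle
  have hcardR : ((Finset.Icc ⌊-T⌋ ⌊T⌋).card : ℝ) = ⌊T⌋ + 1 - ⌊-T⌋ := by exact_mod_cast hcard
  rw [hcardR]
  linarith [Int.floor_le T, Int.lt_floor_add_one (-T)]

theorem AddSubgroup.card_inter_closedBall_le {T : ℝ} (hT : 0 ≤ T) :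
    (Nat.card ((L : Set (ι → ℝ)) ∩ Metric.closedBall 0 T : Set (ι → ℝ)) : ℝ) ≤
      Nat.card ((L : Set (ι → ℝ)) ∩ Metric.closedBall 0 1 : Set (ι → ℝ)) *
        (2 * T + 2) ^ Fintype.card ι := by
  set S : ℝ → Finset (ι → ℝ) := fun r => (L.finite_inter_closedBall r).toFinset
  have mem_S {r : ℝ} {x : ι → ℝ} : x ∈ S r ↔ x ∈ L ∧ ‖x‖ ≤ r := by
    simp [S]
  set floorVec : (ι → ℝ) → (ι → ℤ) := fun x i => ⌊x i⌋
  have floor_mem (x) (hx : x ∈ S T) :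
      floorVec x ∈ Fintype.piFinset fun _ => Finset.Icc ⌊-T⌋ ⌊T⌋ := by
    refine Fintype.mem_piFinset.2 fun i => Finset.mem_Icc.2 ?_
    have hxi : |x i| ≤ T := (norm_le_pi_norm x i).trans (mem_S.1 hx).2
    exact ⟨Int.floor_mono (abs_le.1 hxi).1, Int.floor_mono (abs_le.1 hxi).2⟩
  have fiber_le (b) (_ : b ∈ Fintype.piFinset fun _ => Finset.Icc ⌊-T⌋ ⌊T⌋) :
      {x ∈ S T | floorVec x = b}.card ≤ (S 1).card := by
    rcases Finset.eq_empty_or_nonempty {x ∈ S T | floorVec x = b} with h | ⟨x₀, hx₀⟩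
    · simp [h]
    refine Finset.card_le_card_of_injOn (· - x₀) (fun x hx => ?_) (sub_left_injective.injOn)
    rw [Finset.mem_coe, Finset.mem_filter] at hx
    rw [Finset.mem_filter] at hx₀
    refine Finset.mem_coe.2 <| mem_S.2 ⟨L.sub_mem (mem_S.1 hx.1).1 (mem_S.1 hx₀.1).1,
      (pi_norm_le_iff_of_nonneg zero_le_one).2 fun i => ?_⟩
    have : ⌊x i⌋ = ⌊x₀ i⌋ := congrFun (hx.2.trans hx₀.2.symm) i
    exact (Int.abs_sub_lt_one_of_floor_eq_floor this).le
  have hcount := Finset.card_le_mul_card_image_of_maps_to floor_mem _ fiber_le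
  rw [Fintype.card_piFinset, Finset.prod_const, Finset.card_univ] at hcount
  rw [Nat.card_eq_card_finite_toFinset (L.finite_inter_closedBall T),
    Nat.card_eq_card_finite_toFinset (L.finite_inter_closedBall 1)]
  calc ((S T).card : ℝ) ≤ (S 1).card * ((Finset.Icc ⌊-T⌋ ⌊T⌋).card : ℝ) ^ Fintype.card ι := by
        exact_mod_cast hcount
    _ ≤ _ := by gcongr; exact Int.card_Icc_floor_neg_floor_le hT

end Lattice

open NumberField.Units NumberField.Units.dirichletUnitTheorem Metric

theorem vadicAbs_algebraMap_unit (v : HeightOneSpectrum (𝓞 K)) (u : (𝓞 K)ˣ) :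
    vadicAbs K v (algebraMap (𝓞 K) K u) = 1 := by
  have hval : v.valuation K (algebraMap (𝓞 K) K u) = 1 :=
    v.valuation_eq_one_iff_notMem.2 fun h =>
      v.isPrime.ne_top (Ideal.eq_top_of_isUnit_mem _ h u.isUnit)
  have hne : v.valuation K (algebraMap (𝓞 K) K u) ≠ 0 := hval ▸ one_ne_zero
  have hunzero : WithZero.unzero hne = 1 :=
    WithZero.coe_inj.mp (by rw [WithZero.coe_unzero, hval, WithZero.coe_one])
  rw [vadicAbs, dif_neg hne, hunzero, toAdd_one, zpow_zero]

theorem relHeight_algebraMap_unit (u : (𝓞 K)ˣ) :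
    relHeight K (algebraMap (𝓞 K) K u) = ∏ w : InfinitePlace K, max (w u ^ w.mult) 1 := by
  simp only [relHeight, vadicAbs_algebraMap_unit, max_self, finprod_one, mul_one]

theorem log_relHeight_algebraMap_unit (u : (𝓞 K)ˣ) :
    Real.log (relHeight K (algebraMap (𝓞 K) K u)) =
      ∑ w : InfinitePlace K, max (w.mult * Real.log (w u)) 0 := by
  have hpos (w : InfinitePlace K) : 0 < w u ^ w.mult := pow_pos (Units.pos_at_place u w) _
  rw [relHeight_algebraMap_unit, Real.log_prod fun w _ => (one_pos.trans_le (le_max_right _ _)).ne']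
  simp only [Real.log_max_one (hpos _), Real.log_pow]

theorem norm_logEmbedding_le_log_relHeight (u : (𝓞 K)ˣ) :
    ‖logEmbedding K (Additive.ofMul u)‖ ≤ Real.log (relHeight K (algebraMap (𝓞 K) K u)) := by
  rw [log_relHeight_algebraMap_unit]
  refine (pi_norm_le_iff_of_nonneg (Finset.sum_nonneg fun w _ => le_max_right _ _)).2 fun w => ?_
  rw [Real.norm_eq_abs, logEmbedding_component]
  exact abs_le_sum_max_zero_of_sum_eq_zero (sum_mult_mul_log u) w.1

theorem range_logEmbedding : Set.range (logEmbedding K) = unitLattice K := by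
  ext x
  simp [unitLattice]

theorem card_units_relHeight_le_le_mul_card_unitLattice (D : ℝ) :
    Nat.card {u : (𝓞 K)ˣ // relHeight K (algebraMap (𝓞 K) K u) ≤ D} ≤
      Nat.card (torsion K) *
        Nat.card ((unitLattice K : Set (logSpace K)) ∩ closedBall 0 (Real.log D) : Set _) := by
  set t := closedBall (0 : logSpace K) (Real.log D)
  have hequiv := (logEmbedding K).preimageEquivKerProd t
  rw [range_logEmbedding, logEmbedding_ker] at hequiv
  have : Finite ((unitLattice K : Set (logSpace K)) ∩ t : Set _) :=
    (unitLattice_inter_ball_finite K _).to_subtype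
  have : Finite (torsion K).toAddSubgroup := inferInstanceAs (Finite (torsion K))
  have : Finite (logEmbedding K ⁻¹' t) := .of_equiv _ hequiv.symm
  calc Nat.card {u : (𝓞 K)ˣ // relHeight K (algebraMap (𝓞 K) K u) ≤ D}
      ≤ Nat.card (logEmbedding K ⁻¹' t) := by
        refine Nat.card_le_card_of_injective (fun u => ⟨Additive.ofMul u.1, ?_⟩) ?_
        · have hpos : 0 < relHeight K (algebraMap (𝓞 K) K u.1) := by
            rw [relHeight_algebraMap_unit]
            exact Finset.prod_pos fun w _ => one_pos.trans_le (le_max_right _ _)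
          exact mem_closedBall_zero_iff.2 <| (norm_logEmbedding_le_log_relHeight K u.1).trans
            (Real.log_le_log hpos u.2)
        · intro u v huv
          simpa [Subtype.ext_iff] using huv
    _ = _ := by rw [Nat.card_congr hequiv, Nat.card_prod]; rfl

theorem card_units_relHeight_le_le_mul_pow {D : ℝ} (hD : 1 ≤ D) :
    (Nat.card {u : (𝓞 K)ˣ // relHeight K (algebraMap (𝓞 K) K u) ≤ D} : ℝ) ≤
      Nat.card (torsion K) *
        Nat.card ((unitLattice K : Set (logSpace K)) ∩ closedBall 0 1 : Set _) *
          (2 * Real.log D + 2) ^ rank K := by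
  have : DiscreteTopology (unitLattice K).toAddSubgroup :=
    inferInstanceAs (DiscreteTopology (unitLattice K))
  have hdim : Fintype.card {w : InfinitePlace K // w ≠ w₀} = rank K := by
    rw [← Units.finrank_eq_rank, Module.finrank_fintype_fun_eq_card]
  rw [mul_assoc, ← hdim]
  calc (Nat.card {u : (𝓞 K)ˣ // relHeight K (algebraMap (𝓞 K) K u) ≤ D} : ℝ)
      ≤ Nat.card (torsion K) *
          Nat.card ((unitLattice K : Set (logSpace K)) ∩ closedBall 0 (Real.log D) : Set _) := by
        exact_mod_cast card_units_relHeight_le_le_mul_card_unitLattice K D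
    _ ≤ _ := by
        gcongr
        exact (unitLattice K).toAddSubgroup.card_inter_closedBall_le (Real.log_nonneg hD)

open NumberField.Units in
theorem card_units_of_bounded_height_le (κ : ℝ) (hκ : 0 < κ) :
    ∃ q : ℝ, ∀ D : ℝ, 1 + κ ≤ D →
      (Nat.card {u : (𝓞 K)ˣ // relHeight K (algebraMap (𝓞 K) K u) ≤ D} : ℝ) ≤
        q * Real.log D ^ rank K := by
  set c := Real.log (1 + κ)
  have hc : 0 < c := Real.log_pos (by linarith)
  refine ⟨Nat.card (torsion K) *
    Nat.card ((unitLattice K : Set (logSpace K)) ∩ closedBall 0 1 : Set _) * (2 + 2 / c) ^ rank K,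
    fun D hD => ?_⟩
  have hcD : c ≤ Real.log D := Real.log_le_log (by linarith) hD
  have hlin : 2 * Real.log D + 2 ≤ (2 + 2 / c) * Real.log D := by
    have : 2 ≤ 2 / c * Real.log D := by rw [div_mul_eq_mul_div, le_div_iff₀ hc]; linarith
    linarith
  calc _ ≤ _ := card_units_relHeight_le_le_mul_pow K (by linarith)
    _ ≤ Nat.card (torsion K) *
          Nat.card ((unitLattice K : Set (logSpace K)) ∩ closedBall 0 1 : Set _) *
            ((2 + 2 / c) * Real.log D) ^ rank K := by gcongr; linarith
    _ = _ := by rw [mul_pow]; ring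
end

section
/- Let K be a number field with unit rank r, and let α, β ∈ O_K be nonzero. Writing Λ(α) = (x_1,…,x_{r+1}) and Λ(β) = (y_1,…,y_{r+1}) where Λ(x) = (log|x|_v^{n_v})_{v∈M_K^∞}, one has log N((α,β)) + log H_K(α/β) = Σ_{i=1}^{r+1} max{x_i, y_i}. -/
open NumberField IsDedekindDomain Real
open scoped nonZeroDivisors Classical

variable (K : Type*) [Field K] [NumberField K]

/-!
`H_K(α/β)` is the height of the point `(α : β)`, which splits into the archimedean part
`∏_w max(|α|_w, |β|_w)^{n_w}` and the finite part `∏_v max(|α|_v, |β|_v) = N((α, β))⁻¹`.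
Hence `N((α, β)) · H_K(α/β) = ∏_w max(|α|_w, |β|_w)^{n_w}`; take logarithms.
-/

open Height

lemma ciSup_fin_two {α : Type*} [ConditionallyCompleteLinearOrder α] (f : Fin 2 → α) :
    ⨆ i, f i = max (f 0) (f 1) :=
  eq_of_forall_ge_iff fun c ↦ by
    simp [ciSup_le_iff (Set.finite_range f).bddAbove, Fin.forall_fin_two]

lemma Real.log_max {a b : ℝ} (ha : 0 < a) (hb : 0 < b) :
    Real.log (max a b) = max (Real.log a) (Real.log b) :=
  Real.strictMonoOn_log.monotoneOn.map_max ha hb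

section

variable {K}

lemma vadicAbs_eq_adicAbv (v : HeightOneSpectrum (𝓞 K)) (x : K) :
    vadicAbs K v x = HeightOneSpectrum.adicAbv K v x := by
  rw [HeightOneSpectrum.adicAbv_def, vadicAbs]
  split_ifs with hx
  · simp [WithZeroMulInt.toNNReal_pos_apply _ hx]
  · simp [WithZeroMulInt.toNNReal_neg_apply _ hx]

lemma finprod_vadicAbs_eq_finprod_finitePlace (f : ℝ → ℝ) (x : K) :
    ∏ᶠ v : HeightOneSpectrum (𝓞 K), f (vadicAbs K v x) = ∏ᶠ w : FinitePlace K, f (w x) := by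
  rw [← finprod_comp_equiv FinitePlace.equivHeightOneSpectrum.symm]
  simp only [FinitePlace.equivHeightOneSpectrum_symm_apply, FinitePlace.norm_embedding,
    vadicAbs_eq_adicAbv]

lemma relHeight_eq_mulHeight₁ (x : K) : relHeight K x = mulHeight₁ x := by
  rw [relHeight, NumberField.mulHeight₁_eq, finprod_vadicAbs_eq_finprod_finitePlace (max · 1)]
  congr 1
  refine Finset.prod_congr rfl fun w _ ↦ ?_
  rw [pow_left_monotoneOn.map_max (w.1.nonneg x) zero_le_one, one_pow]

lemma relHeight_ne_zero (x : K) : relHeight K x ≠ 0 := by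
  rw [relHeight_eq_mulHeight₁]
  exact mulHeight₁_ne_zero x

lemma mulHeight_mul_absNorm_span_range {ι : Type*} [Finite ι] {x : ι → 𝓞 K} (hx : x ≠ 0) :
    mulHeight (fun i ↦ (x i : K)) * Ideal.absNorm (Ideal.span (Set.range x)) =
      ∏ w : InfinitePlace K, (⨆ i, w (x i)) ^ w.mult := by
  have hx' : (fun i ↦ (x i : K)) ≠ 0 := by
    simpa [funext_iff] using hx
  rw [NumberField.mulHeight_eq hx', mul_assoc, mul_comm (finprod _),
    absNorm_mul_finprod_finitePlace_eq_one hx, mul_one]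

lemma relHeight_div_mul_absNorm_span_pair {α β : 𝓞 K} (h : α ≠ 0 ∨ β ≠ 0) :
    relHeight K ((α : K) / (β : K)) * Ideal.absNorm (Ideal.span {α, β}) =
      ∏ w : InfinitePlace K, max (w α) (w β) ^ w.mult := by
  have hpair : ![α, β] ≠ 0 := by
    simp only [ne_eq, funext_iff, Fin.forall_fin_two, not_and_or]
    simpa using h
  have hcoe : (fun i ↦ ((![α, β] i : 𝓞 K) : K)) = ![(α : K), (β : K)] := by
    ext i
    fin_cases i <;> rfl
  rw [relHeight_eq_mulHeight₁, mulHeight₁_div_eq_mulHeight, ← hcoe,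
    ← Matrix.range_cons_cons_empty, mulHeight_mul_absNorm_span_range hpair]
  simp [ciSup_fin_two]

end

theorem log_norm_add_log_height_eq_sum_max (α β : 𝓞 K) (hα : α ≠ 0) (hβ : β ≠ 0) :
    Real.log (Ideal.absNorm (Ideal.span {α, β})) +
        Real.log (relHeight K ((α : K) / (β : K))) =
      ∑ w : InfinitePlace K,
        max (w.mult * Real.log (w (α : K))) (w.mult * Real.log (w (β : K))) := by
  have hwα (w : InfinitePlace K) : 0 < w α := w.pos_iff.2 (by simpa using hα)
  have hwβ (w : InfinitePlace K) : 0 < w β := w.pos_iff.2 (by simpa using hβ)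
  have hspan : Ideal.span {α, β} ≠ ⊥ := fun h ↦
    hα <| Ideal.mem_bot.1 <| h ▸ Ideal.subset_span (Set.mem_insert α {β})
  have hnorm : (Ideal.absNorm (Ideal.span {α, β}) : ℝ) ≠ 0 := by
    exact_mod_cast Ideal.absNorm_eq_zero_iff.not.2 hspan
  rw [← Real.log_mul hnorm (relHeight_ne_zero _), mul_comm,
    relHeight_div_mul_absNorm_span_pair (Or.inl hα),
    Real.log_prod fun w _ ↦ (pow_pos (lt_max_of_lt_left (hwα w)) _).ne']
  refine Finset.sum_congr rfl fun w _ ↦ ?_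
  rw [Real.log_pow, Real.log_max (hwα w) (hwβ w), mul_max_of_nonneg _ _ (Nat.cast_nonneg _)]
end
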